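/- Let η be a substitution, u a two-sided periodic point with growing seed s = u_{-1}|u_0 and period p. Then the image of rep_u is exactly ⋃_{ℓ∈ℕ} L_{ℓp+1}(A_{η,s}) \ {0·W_min, 1·W_max}·D*, i.e., the words of length ≡ 1 (mod p) accepted by A_{η,s} which do not begin with 0 followed by W_min nor with 1 followed by W_max. -/
import Mathlib


open Filter List

variable {A : Type*}

/-- A substitution applied to a word: concatenation of the images of its letters. -/
def substW (η : A → List A) (w : List A) : List A := (w.map η).flatten

/-- The `k`-th iterate of a substitution applied to a word. -/
def iterW (η : A → List A) (k : ℕ) (w : List A) : List A := (substW η)^[k] w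

/-- `η` is a substitution: nonempty images and at least one growing letter. -/
def IsSubstitution (η : A → List A) : Prop :=
  (∀ c, η c ≠ []) ∧ ∃ a, Tendsto (fun k => (iterW η k [a]).length) atTop atTop

/-- `(m i, a i)` for `i = 0, …, len-1` is an `x`-admissible sequence:
`m (i) ++ [a i]` is a prefix of `η (a (i+1))` and `m (len-1) ++ [a (len-1)]`
is a prefix of `η x`. -/
def AdmSeq (η : A → List A) (len : ℕ) (m : ℕ → List A) (a : ℕ → A) (x : A) : Prop :=
  (∀ i, i + 1 < len → (m i ++ [a i]) <+: η (a (i + 1))) ∧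
  (1 ≤ len → (m (len - 1) ++ [a (len - 1)]) <+: η x)

/-- `Σ_{j<k} |η^j(m_j)|`. -/
def sumLen (η : A → List A) (k : ℕ) (m : ℕ → List A) : ℕ :=
  ∑ j ∈ Finset.range k, (iterW η j (m j)).length

/-- `η^{k-1}(m_{k-1}) η^{k-2}(m_{k-2}) ⋯ η^0(m_0)`. -/
def concatDT (η : A → List A) (k : ℕ) (m : ℕ → List A) : List A :=
  ((List.range k).reverse.map (fun j => iterW η j (m j))).flatten

/-- The digit word `|m_{k-1}| ⊙ |m_{k-2}| ⊙ ⋯ ⊙ |m_0|`. -/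
def dtDigits (k : ℕ) (m : ℕ → List A) : List ℕ :=
  (List.range k).reverse.map (fun j => (m j).length)

/-- Partial run of the automaton `A_{η,x}`: from state `x`, the digit `d`
moves to the `d`-th letter of `η x` when `d < |η x|`. -/
def run (η : A → List A) : List ℕ → A → Option A
  | [], x => some x
  | d :: w, x => if h : d < (η x).length then run η w ((η x)[d]) else none

/-- `u` restricted to nonnegative positions is a periodic point of `η` of period `p`:
every `η^p`-image of a prefix of `u` is again a prefix of `u`. -/
def RightPer (η : A → List A) (p : ℕ) (u : ℤ → A) : Prop :=
  ∀ n : ℕ, ∀ j : ℕ, j < (iterW η p (List.ofFn (fun i : Fin (n+1) => u i))).length →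
    (iterW η p (List.ofFn (fun i : Fin (n+1) => u i)))[j]? = some (u j)

/-- `u` restricted to negative positions is a periodic point of `η` of period `p`:
every `η^p`-image of a suffix `u_{-(n+1)} ⋯ u_{-1}` of the left part is again a
suffix of the left part of `u`. -/
def LeftPer (η : A → List A) (p : ℕ) (u : ℤ → A) : Prop :=
  ∀ n : ℕ, ∀ j : ℕ,
    j < (iterW η p (List.ofFn (fun i : Fin (n+1) => u ((i : ℤ) - (n+1))))).length →
    (iterW η p (List.ofFn (fun i : Fin (n+1) => u ((i : ℤ) - (n+1)))))[j]? =
      some (u ((j : ℤ) -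
        (iterW η p (List.ofFn (fun i : Fin (n+1) => u ((i : ℤ) - (n+1))))).length))

/-- `u : ℤ → A` is a two-sided periodic point of `η` of period `p ≥ 1` with
growing seed `u₋₁ | u₀`. -/
def TwoSidedPerPoint (η : A → List A) (p : ℕ) (u : ℤ → A) : Prop :=
  1 ≤ p ∧ RightPer η p u ∧ LeftPer η p u ∧
  Tendsto (fun k => (iterW η k [u 0]).length) atTop atTop ∧
  Tendsto (fun k => (iterW η k [u (-1)]).length) atTop atTop

/-- The Dumont–Thomas decomposition data of a positive integer `n` with respect to
the letter `x` (Theorem of Dumont–Thomas for the right-infinite part):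
`p ∣ k`, `p ≤ k`, the sequence is `x`-admissible, `m_{k-1} ⋯ m_{k-p} ≠ ε` and
`Σ_{j<k} |η^j(m_j)| = n`. -/
def PosSpec (η : A → List A) (p : ℕ) (x : A) (n : ℤ) (k : ℕ) (m : ℕ → List A)
    (a : ℕ → A) : Prop :=
  p ∣ k ∧ p ≤ k ∧ AdmSeq η k m a x ∧ (∃ i, i < p ∧ m (k - 1 - i) ≠ []) ∧
  (sumLen η k m : ℤ) = n

/-- The Dumont–Thomas decomposition data of an integer `n ≤ -2` with respect to
the letter `b` (Theorem of Dumont–Thomas for the left-infinite part). -/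
def NegSpec (η : A → List A) (p : ℕ) (b : A) (n : ℤ) (k : ℕ) (m : ℕ → List A)
    (a : ℕ → A) : Prop :=
  p ∣ k ∧ p ≤ k ∧ AdmSeq η k m a b ∧
  ((List.range p).map (fun i => iterW η (p - 1 - i) (m (k - 1 - i)))).flatten
      ++ [a (k - p)] ≠ iterW η p [b] ∧
  (sumLen η k m : ℤ) = n + (iterW η k [b]).length

/-- `w` is the Dumont–Thomas complement representation `rep_u(n)` of `n ∈ ℤ`. -/
def RepSpec (η : A → List A) (p : ℕ) (u : ℤ → A) (n : ℤ) (w : List ℕ) : Prop :=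
  (n = 0 ∧ w = [0]) ∨ (n = -1 ∧ w = [1]) ∨
  (1 ≤ n ∧ ∃ k m a, PosSpec η p (u 0) n k m a ∧ w = 0 :: dtDigits k m) ∨
  (n ≤ -2 ∧ ∃ k m a, NegSpec η p (u (-1)) n k m a ∧ w = 1 :: dtDigits k m)

/-- Run of the automaton `A_{η,s}` with initial state `start`: the first digit
`0` (resp. `1`) moves to `u 0` (resp. `u (-1)`). -/
def runSeed (η : A → List A) (u : ℤ → A) : List ℕ → Option A
  | [] => none
  | d :: w => if d = 0 then run η w (u 0) else if d = 1 then run η w (u (-1)) else none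

/-- `|η^{k-p-1}(m_{k-1}) ⋯ η^0(m_p)|`, the `u`-quotient of a positive integer. -/
def uQuotPos (η : A → List A) (p k : ℕ) (m : ℕ → List A) : ℤ :=
  ∑ j ∈ Finset.range (k - p), ((iterW η j (m (j + p))).length : ℤ)

/-- `w = tail_{η,p,x}(n)`: the digit word of the unique `x`-admissible sequence of
length `p` whose length-sum is `n`. -/
def TailSpec (η : A → List A) (p : ℕ) (x : A) (n : ℕ) (w : List ℕ) : Prop :=
  ∃ m a, AdmSeq η p m a x ∧ sumLen η p m = n ∧ w = dtDigits p m

/-- Radix order: shorter words first, ties broken lexicographically. -/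
def radLt (v w : List ℕ) : Prop :=
  v.length < w.length ∨ (v.length = w.length ∧ List.Lex (· < ·) v w)

/-- Reversed-radix order: longer words first, ties broken lexicographically. -/
def revLt (v w : List ℕ) : Prop :=
  w.length < v.length ∨ (v.length = w.length ∧ List.Lex (· < ·) v w)

/-- The total order `≺` on `{0,1}D*`. -/
def precLt (v w : List ℕ) : Prop :=
  (v.head? = some 1 ∧ w.head? = some 0) ∨
  (v.head? = some 0 ∧ w.head? = some 0 ∧ radLt v w) ∨
  (v.head? = some 1 ∧ w.head? = some 1 ∧ revLt v w)

/-- The base-2 value `Σ_{i<k} w_i 2^i` of the word `w = w_{k-1} ⋯ w_0`. -/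
def natVal2 (w : List ℕ) : ℕ := w.foldl (fun acc d => 2 * acc + d) 0

/-- The two's complement value `Σ_{i<k} w_i 2^i − w_{k-1} 2^k`. -/
def val2c (w : List ℕ) : ℤ := (natVal2 w : ℤ) - (w.headI : ℤ) * 2 ^ w.length

/-- Fibonacci numbers with `F 0 = 1`, `F 1 = 2`. -/
def fib2 : ℕ → ℕ
  | 0 => 1
  | 1 => 2
  | n + 2 => fib2 (n + 1) + fib2 n

/-- The Fibonacci complement value `Σ_{i<k} w_i F_i − w_{k-1} F_k`
of the word `w = w_{k-1} ⋯ w_0`. -/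
def valFc (w : List ℕ) : ℤ :=
  (∑ i ∈ Finset.range w.length, (w.reverse.getD i 0 : ℤ) * fib2 i) -
    (w.headI : ℤ) * fib2 w.length

-- basic lemmas
theorem substW_append (η : A → List A) (v w : List A) :
    substW η (v ++ w) = substW η v ++ substW η w := by simp [substW]

theorem iterW_zero (η : A → List A) (w : List A) : iterW η 0 w = w := rfl

theorem iterW_succ (η : A → List A) (k : ℕ) (w : List A) :
    iterW η (k+1) w = iterW η k (substW η w) := Function.iterate_succ_apply _ _ _

theorem iterW_add (η : A → List A) (s t : ℕ) (w : List A) :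
    iterW η (s + t) w = iterW η s (iterW η t w) := Function.iterate_add_apply _ _ _ _

theorem iterW_append (η : A → List A) (k : ℕ) (v w : List A) :
    iterW η k (v ++ w) = iterW η k v ++ iterW η k w := by
  induction k generalizing v w with
  | zero => rfl
  | succ k ih => rw [iterW_succ, substW_append, ih, iterW_succ, iterW_succ]

theorem substW_ne_nil (η : A → List A) (hη : ∀ c, η c ≠ []) {w : List A} (hw : w ≠ []) :
    substW η w ≠ [] := by
  cases w with
  | nil => exact absurd rfl hw
  | cons c w =>
    simp only [substW, List.map_cons, List.flatten_cons]
    intro h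
    exact hη c (List.append_eq_nil_iff.mp h).1

theorem iterW_ne_nil (η : A → List A) (hη : ∀ c, η c ≠ []) (k : ℕ) {w : List A}
    (hw : w ≠ []) : iterW η k w ≠ [] := by
  induction k generalizing w with
  | zero => exact hw
  | succ k ih => rw [iterW_succ]; exact ih (substW_ne_nil η hη hw)

theorem iterW_prefix (η : A → List A) (k : ℕ) {v w : List A} (h : v <+: w) :
    iterW η k v <+: iterW η k w := by
  obtain ⟨t, rfl⟩ := h
  rw [iterW_append]; exact List.prefix_append _ _

theorem dtDigits_succ (k : ℕ) (m : ℕ → List A) :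
    dtDigits (k+1) m = (m k).length :: dtDigits k m := by
  simp [dtDigits, List.range_succ]

theorem concatDT_succ (η : A → List A) (k : ℕ) (m : ℕ → List A) :
    concatDT η (k+1) m = iterW η k (m k) ++ concatDT η k m := by
  simp [concatDT, List.range_succ]

theorem sumLen_succ (η : A → List A) (k : ℕ) (m : ℕ → List A) :
    sumLen η (k+1) m = sumLen η k m + (iterW η k (m k)).length :=
  Finset.sum_range_succ _ _

theorem concatDT_length (η : A → List A) (k : ℕ) (m : ℕ → List A) :
    (concatDT η k m).length = sumLen η k m := by
  induction k with
  | zero => rfl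
  | succ k ih =>
    rw [concatDT_succ, sumLen_succ, List.length_append, ih]; omega

theorem dtDigits_length (k : ℕ) (m : ℕ → List A) : (dtDigits k m).length = k := by
  simp [dtDigits]

theorem admSeq_zero (η : A → List A) (m : ℕ → List A) (a : ℕ → A) (x : A) :
    AdmSeq η 0 m a x := ⟨fun i h => by omega, fun h => by omega⟩

theorem admSeq_succ (η : A → List A) (k : ℕ) (m : ℕ → List A) (a : ℕ → A) (x : A) :
    AdmSeq η (k+1) m a x ↔ AdmSeq η k m a (a k) ∧ (m k ++ [a k]) <+: η x := by
  constructor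
  · rintro ⟨h1, h2⟩
    refine ⟨⟨fun i hi => h1 i (by omega), fun hk => ?_⟩, ?_⟩
    · have := h1 (k-1) (by omega)
      have e : k - 1 + 1 = k := by omega
      rwa [e] at this
    · simpa using h2 (by omega)
  · rintro ⟨⟨h1, h2⟩, h3⟩
    refine ⟨fun i hi => ?_, fun _ => by simpa using h3⟩
    rcases Nat.lt_or_ge (i+1) k with h | h
    · exact h1 i h
    · have hik : i + 1 = k := by omega
      have := h2 (by omega)
      have e : k - 1 = i := by omega
      rw [e, ← hik] at this
      exact this

theorem admSeq_restrict (η : A → List A) {k : ℕ} {m : ℕ → List A} {a : ℕ → A} {x : A}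
    (h : AdmSeq η k m a x) {t : ℕ} (ht : t < k) : AdmSeq η t m a (a t) := by
  refine ⟨fun i hi => h.1 i (by omega), fun h1 => ?_⟩
  have := h.1 (t-1) (by omega)
  have e : t - 1 + 1 = t := by omega
  rwa [e] at this

theorem admSeq_top (η : A → List A) {k : ℕ} {m : ℕ → List A} {a : ℕ → A} {x : A}
    (h : AdmSeq η k m a x) {p t : ℕ} (hk : k = t + p) :
    AdmSeq η p (fun j => m (j + t)) (fun j => a (j + t)) x := by
  subst hk
  refine ⟨fun i hi => ?_, fun hp => ?_⟩
  · have := h.1 (i + t) (by omega)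
    have e : i + 1 + t = i + t + 1 := by omega
    show m (i + t) ++ [a (i + t)] <+: η (a (i + 1 + t))
    rw [e]; exact this
  · have := h.2 (by omega)
    have e : p - 1 + t = t + p - 1 := by omega
    show m (p - 1 + t) ++ [a (p - 1 + t)] <+: η x
    rw [e]; exact this

-- Lemma A: the admissible prefix property
theorem concatDT_prefix (η : A → List A) {k : ℕ} {m : ℕ → List A} {a : ℕ → A} {x : A}
    (h : AdmSeq η k m a x) (hk : 1 ≤ k) :
    concatDT η k m ++ [a 0] <+: iterW η k [x] := by
  induction k generalizing x with
  | zero => omega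
  | succ k ih =>
    rw [admSeq_succ] at h
    obtain ⟨hadm, hpre⟩ := h
    rcases Nat.eq_zero_or_pos k with rfl | hk'
    · have e1 : concatDT η 1 m = m 0 := by
        simp [concatDT, List.range_succ, iterW]
      have e2 : iterW η 1 [x] = η x := by simp [iterW, substW]
      rw [e1, e2]; exact hpre
    · have h1 : concatDT η k m ++ [a 0] <+: iterW η k [a k] := ih hadm hk'
      have h2 : iterW η k (m k ++ [a k]) <+: iterW η k (η x) := iterW_prefix η k hpre
      have h3 : iterW η (k+1) [x] = iterW η k (η x) := by
        rw [iterW_succ]; congr 1; simp [substW]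
      rw [concatDT_succ, List.append_assoc]
      rw [h3]
      refine List.IsPrefix.trans ?_ h2
      rw [iterW_append]
      exact (List.prefix_append_right_inj _).mpr h1

-- Lemma G: sumLen bound
theorem sumLen_lt (η : A → List A) (hη : ∀ c, η c ≠ []) {k : ℕ} {m : ℕ → List A}
    {a : ℕ → A} {x : A} (h : AdmSeq η k m a x) :
    sumLen η k m < (iterW η k [x]).length := by
  rcases Nat.eq_zero_or_pos k with rfl | hk
  · have : iterW η 0 [x] = [x] := rfl
    simp [sumLen, this]
  · have := (concatDT_prefix η h hk).length_le
    rw [List.length_append, concatDT_length] at this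
    simpa using this

-- run of an admissible sequence succeeds
theorem run_of_admSeq (η : A → List A) {k : ℕ} {m : ℕ → List A} {a : ℕ → A} {x : A}
    (h : AdmSeq η k m a x) : ∃ y, run η (dtDigits k m) x = some y := by
  induction k generalizing x with
  | zero => exact ⟨x, rfl⟩
  | succ k ih =>
    rw [admSeq_succ] at h
    obtain ⟨hadm, hpre⟩ := h
    have hlt : (m k).length < (η x).length := by
      have := hpre.length_le; simp at this; omega
    have hget : (η x)[(m k).length] = a k := by
      have := hpre.getElem (show (m k).length < (m k ++ [a k]).length by simp)
      simpa using this.symm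
    rw [dtDigits_succ]
    simp only [run, hlt, dif_pos, hget]
    exact ih hadm

-- successful run yields an admissible sequence
theorem admSeq_of_run (η : A → List A) (v : List ℕ) (x : A)
    (h : run η v x ≠ none) :
    ∃ (m : ℕ → List A) (a : ℕ → A), AdmSeq η v.length m a x ∧ dtDigits v.length m = v := by
  induction v generalizing x with
  | nil => exact ⟨fun _ => [], fun _ => x, admSeq_zero η _ _ _, rfl⟩
  | cons d rest ih =>
    by_cases hd : d < (η x).length
    · simp only [run, hd, dif_pos] at h
      obtain ⟨m', a', hadm, hdig⟩ := ih ((η x)[d]) h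
      refine ⟨fun j => if h : j = rest.length then (η x).take d else m' j,
              fun j => if h : j = rest.length then (η x)[d] else a' j, ?_, ?_⟩
      · rw [List.length_cons, admSeq_succ]
        constructor
        · refine ⟨fun i hi => ?_, fun h1 => ?_⟩
          · simp only [dif_neg (show ¬ i = rest.length by omega),
              dif_neg (show ¬ i + 1 = rest.length by omega)]
            exact hadm.1 i hi
          · simp only [dif_neg (show ¬ rest.length - 1 = rest.length by omega),
              dif_pos rfl]
            exact hadm.2 h1
        · have : (η x).take d ++ [(η x)[d]] = (η x).take (d+1) := by
            rw [List.take_succ]; simp [hd]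
          simp only [dif_pos rfl, dite_true, this]
          exact List.take_prefix _ _
      · have h2 : dtDigits rest.length
            (fun j => if h : j = rest.length then (η x).take d else m' j)
            = dtDigits rest.length m' := by
          unfold dtDigits
          apply List.map_congr_left
          intro j hj
          simp only [List.mem_reverse, List.mem_range] at hj
          simp only [dif_neg (show ¬ j = rest.length by omega)]
        rw [List.length_cons, dtDigits_succ, h2, hdig]
        congr 1
        simp [Nat.min_eq_left hd.le]
    · simp only [run, hd, dif_neg, not_true] at h
      exact absurd rfl h

-- digits determine the sequence
theorem admSeq_eq_of_digits (η : A → List A) {k : ℕ} {m m' : ℕ → List A} {a a' : ℕ → A}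
    {x : A} (h : AdmSeq η k m a x) (h' : AdmSeq η k m' a' x)
    (hd : dtDigits k m = dtDigits k m') : ∀ j < k, m j = m' j ∧ a j = a' j := by
  induction k generalizing x with
  | zero => omega
  | succ k ih =>
    rw [admSeq_succ] at h h'
    rw [dtDigits_succ, dtDigits_succ] at hd
    obtain ⟨hlen, hd⟩ := List.cons_eq_cons.mp hd
    have hm : m k = m' k := by
      have p1 : m k <+: η x := (List.prefix_append _ _).trans h.2
      have p2 : m' k <+: η x := (List.prefix_append _ _).trans h'.2
      exact (List.prefix_of_prefix_length_le p1 p2 (by omega)).eq_of_length hlen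
    have hlt : (m k).length < (η x).length := by
      have := h.2.length_le; simp at this; omega
    have ha : a k = a' k := by
      have e1 := h.2.getElem (show (m k).length < (m k ++ [a k]).length by simp)
      have e2 := h'.2.getElem (show (m' k).length < (m' k ++ [a' k]).length by simp)
      simp at e1 e2
      rw [e1, e2]
      simp [hm]
    have h'' : AdmSeq η k m' a' (a k) := by rw [ha]; exact h'.1
    intro j hj
    rcases Nat.lt_or_ge j k with hjk | hjk
    · exact ih h.1 h'' hd j hjk
    · have : j = k := by omega
      subst this
      exact ⟨hm, ha⟩

theorem sumLen_lt_of_len_lt (η : A → List A) (hη : ∀ c, η c ≠ []) {k : ℕ}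
    {m m' : ℕ → List A} {a : ℕ → A} {x : A}
    (hadm : AdmSeq η k m a (a k)) (hpre : (m k ++ [a k]) <+: η x)
    (hpre' : m' k <+: η x) (hlt : (m k).length < (m' k).length) :
    sumLen η (k+1) m < sumLen η (k+1) m' := by
  have h1 : (m k ++ [a k]) <+: m' k :=
    List.prefix_of_prefix_length_le hpre hpre' (by simp; omega)
  have h2 : (iterW η k (m k)).length + (iterW η k [a k]).length ≤ (iterW η k (m' k)).length := by
    have := (iterW_prefix η k h1).length_le
    rwa [iterW_append, List.length_append] at this
  have h3 : sumLen η k m < (iterW η k [a k]).length := sumLen_lt η hη hadm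
  have h4 : sumLen η k m' ≥ 0 := Nat.zero_le _
  rw [sumLen_succ, sumLen_succ]
  omega

-- injectivity of sumLen on admissible sequences
theorem dtDigits_eq_of_sumLen_eq (η : A → List A) (hη : ∀ c, η c ≠ []) {k : ℕ}
    {m m' : ℕ → List A} {a a' : ℕ → A} {x : A}
    (h : AdmSeq η k m a x) (h' : AdmSeq η k m' a' x)
    (hs : sumLen η k m = sumLen η k m') : dtDigits k m = dtDigits k m' := by
  induction k generalizing x with
  | zero => rfl
  | succ k ih =>
    rw [admSeq_succ] at h h'
    have hmm : (m k).length = (m' k).length := by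
      rcases Nat.lt_trichotomy (m k).length (m' k).length with hl | hl | hl
      · exact absurd hs (Nat.ne_of_lt (sumLen_lt_of_len_lt η hη h.1 h.2
          ((List.prefix_append _ _).trans h'.2) hl))
      · exact hl
      · exact absurd hs.symm (Nat.ne_of_lt (sumLen_lt_of_len_lt η hη h'.1 h'.2
          ((List.prefix_append _ _).trans h.2) hl))
    have hm : m k = m' k := by
      have p1 : m k <+: η x := (List.prefix_append _ _).trans h.2
      have p2 : m' k <+: η x := (List.prefix_append _ _).trans h'.2
      exact (List.prefix_of_prefix_length_le p1 p2 (by omega)).eq_of_length hmm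
    have ha : a k = a' k := by
      have e1 := h.2.getElem (show (m k).length < (m k ++ [a k]).length by simp)
      have e2 := h'.2.getElem (show (m' k).length < (m' k ++ [a' k]).length by simp)
      simp at e1 e2
      rw [e1, e2]
      simp [hm]
    have h'' : AdmSeq η k m' a' (a k) := by rw [ha]; exact h'.1
    have hs' : sumLen η k m = sumLen η k m' := by
      rw [sumLen_succ, sumLen_succ, hm] at hs
      omega
    rw [dtDigits_succ, dtDigits_succ, hm, ih h.1 h'' hs']

theorem iterW_nil (η : A → List A) (k : ℕ) : iterW η k ([] : List A) = [] := by
  induction k with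
  | zero => rfl
  | succ k ih => rw [iterW_succ]; exact ih

theorem iterW_concatDT_length (η : A → List A) (t q : ℕ) (m' : ℕ → List A) :
    (iterW η t (concatDT η q m')).length
      = ∑ j ∈ Finset.range q, (iterW η (t + j) (m' j)).length := by
  induction q with
  | zero => simp [concatDT, iterW_nil]
  | succ q ih =>
    rw [concatDT_succ, iterW_append, List.length_append, ih, Finset.sum_range_succ,
      ← iterW_add]
    omega

theorem sumLen_add (η : A → List A) (t p : ℕ) (m : ℕ → List A) :
    sumLen η (t + p) m
      = sumLen η t m + ∑ j ∈ Finset.range p, (iterW η (t + j) (m (j + t))).length := by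
  induction p with
  | zero => simp
  | succ p ih =>
    have e : t + (p + 1) = (t + p) + 1 := by omega
    rw [e, sumLen_succ, ih, Finset.sum_range_succ]
    have e2 : p + t = t + p := by omega
    rw [e2]
    omega

theorem sumLen_split (η : A → List A) (t p : ℕ) (m : ℕ → List A) :
    sumLen η (t + p) m
      = sumLen η t m + (iterW η t (concatDT η p (fun j => m (j + t)))).length := by
  rw [sumLen_add, iterW_concatDT_length]

theorem dtDigits_split (t p : ℕ) (m : ℕ → List A) :
    dtDigits (t + p) m = dtDigits p (fun j => m (j + t)) ++ dtDigits t m := by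
  induction p with
  | zero => simp [dtDigits]
  | succ p ih =>
    have e : t + (p + 1) = (t + p) + 1 := by omega
    rw [e, dtDigits_succ, ih, dtDigits_succ, List.cons_append]
    have e2 : p + t = t + p := by omega
    rw [e2]

theorem sumLen_congr (η : A → List A) (k : ℕ) {m m' : ℕ → List A}
    (h : ∀ j < k, m j = m' j) : sumLen η k m = sumLen η k m' :=
  Finset.sum_congr rfl (fun j hj => by rw [h j (Finset.mem_range.mp hj)])

theorem one_le_sumLen (η : A → List A) (hη : ∀ c, η c ≠ []) {k : ℕ} {m : ℕ → List A}
    {j : ℕ} (hj : j < k) (h : m j ≠ []) : 1 ≤ sumLen η k m := by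
  have h1 : 1 ≤ (iterW η j (m j)).length :=
    List.length_pos_iff.mpr (iterW_ne_nil η hη j h)
  have h2 : (iterW η j (m j)).length ≤ sumLen η k m :=
    Finset.single_le_sum (f := fun j => (iterW η j (m j)).length)
      (fun i _ => Nat.zero_le _) (Finset.mem_range.mpr hj)
  omega

theorem range_reverse_eq (n : ℕ) :
    (List.range n).reverse = (List.range n).map (fun i => n - 1 - i) := by
  induction n with
  | zero => rfl
  | succ n ih =>
    have l1 : (List.range (n+1)).reverse = n :: (List.range n).reverse := by
      simp [List.range_succ]
    rw [l1, ih, List.range_succ_eq_map, List.map_cons, List.map_map]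
    congr 1
    apply List.map_congr_left
    intro i hi
    simp only [Function.comp]
    omega

theorem flatten_eq_concatDT (η : A → List A) {p k : ℕ} (hpk : p ≤ k) (m : ℕ → List A) :
    ((List.range p).map (fun i => iterW η (p - 1 - i) (m (k - 1 - i)))).flatten
      = concatDT η p (fun j => m (j + (k - p))) := by
  unfold concatDT
  rw [range_reverse_eq, List.map_map]
  congr 1
  apply List.map_congr_left
  intro i hi
  simp only [List.mem_range] at hi
  simp only [Function.comp]
  congr 2
  omega

theorem concatDT_full_iff (η : A → List A) {p : ℕ} {m : ℕ → List A} {a : ℕ → A} {b : A}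
    (hadm : AdmSeq η p m a b) (hp : 1 ≤ p) :
    concatDT η p m ++ [a 0] = iterW η p [b] ↔
      sumLen η p m = (iterW η p [b]).length - 1 := by
  have hpre := concatDT_prefix η hadm hp
  constructor
  · intro h
    have := congrArg List.length h
    rw [List.length_append, concatDT_length] at this
    simp at this
    omega
  · intro h
    apply hpre.eq_of_length
    rw [List.length_append, concatDT_length]
    have hN : 1 ≤ (iterW η p [b]).length := by
      have := hpre.length_le
      simp at this
      omega
    simp
    omega

theorem negGap (η : A → List A) (hη : ∀ c, η c ≠ []) {k p : ℕ} {m : ℕ → List A}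
    {a : ℕ → A} {b : A} (hadm : AdmSeq η k m a b) (hp : 1 ≤ p) (hpk : p ≤ k)
    (hne : concatDT η p (fun j => m (j + (k - p))) ++ [a (k - p)] ≠ iterW η p [b]) :
    sumLen η k m + 2 ≤ (iterW η k [b]).length := by
  set t := k - p with ht
  have hkk : k = t + p := by omega
  have htop : AdmSeq η p (fun j => m (j + t)) (fun j => a (j + t)) b := admSeq_top η hadm hkk
  have hpre := concatDT_prefix η htop hp
  have ha0 : (0 : ℕ) + t = t := by omega
  rw [ha0] at hpre
  obtain ⟨rest, hrest⟩ := hpre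
  have hrne : rest ≠ [] := by
    intro h0
    rw [h0, List.append_nil] at hrest
    exact hne hrest
  have hbot : AdmSeq η t m a (a t) := admSeq_restrict η hadm (by omega)
  have hsb : sumLen η t m < (iterW η t [a t]).length := sumLen_lt η hη hbot
  have hrl : 1 ≤ (iterW η t rest).length := List.length_pos_iff.mpr (iterW_ne_nil η hη t hrne)
  have hsplit := sumLen_split η t p m
  have hlen : (iterW η k [b]).length
      = (iterW η t (concatDT η p (fun j => m (j + t)))).length
        + (iterW η t [a t]).length + (iterW η t rest).length := by
    have e1 : iterW η k [b] = iterW η t (iterW η p [b]) := by rw [hkk, iterW_add η t p]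
    rw [e1, ← hrest]
    rw [List.append_assoc, iterW_append, iterW_append]
    simp only [List.length_append]
    omega
  rw [← hkk] at hsplit
  omega

theorem prefix_block_iff {D E W : List ℕ} (h : W.length = D.length) :
    W <+: D ++ E ↔ W = D := by
  constructor
  · intro hp
    exact (List.prefix_of_prefix_length_le hp (List.prefix_append _ _) (by omega)).eq_of_length h
  · rintro rfl
    exact List.prefix_append _ _

theorem dtDigits_eq_replicate_iff (p : ℕ) (m : ℕ → List A) :
    dtDigits p m = List.replicate p 0 ↔ ∀ j < p, m j = [] := by
  rw [List.eq_replicate_iff]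
  unfold dtDigits
  constructor
  · rintro ⟨-, h⟩ j hj
    have : (m j).length = 0 := by
      apply h
      simp only [List.mem_map, List.mem_reverse, List.mem_range]
      exact ⟨j, hj, rfl⟩
    exact List.length_eq_zero_iff.mp this
  · intro h
    refine ⟨by simp, ?_⟩
    intro x hx
    simp only [List.mem_map, List.mem_reverse, List.mem_range] at hx
    obtain ⟨j, hj, rfl⟩ := hx
    rw [h j hj]
    rfl

/-- The image of `rep_u` is exactly the set of words of length
`≡ 1 (mod p)` accepted by `A_{η,s}` that begin neither with `0·W_min` nor with
`1·W_max`, where `W_min = 0^p` and `W_max = tail_{η,p,u₋₁}(|η^p(u₋₁)|−1)`. -/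
theorem rep_image [Finite A] (η : A → List A) (hη : IsSubstitution η)
    (p : ℕ) (u : ℤ → A) (hu : TwoSidedPerPoint η p u) (Wmax : List ℕ)
    (hW : TailSpec η p (u (-1)) ((iterW η p [u (-1)]).length - 1) Wmax) :
    ∀ w : List ℕ,
      (∃ n : ℤ, RepSpec η p u n w) ↔
      ((∃ ℓ : ℕ, w.length = ℓ * p + 1) ∧ runSeed η u w ≠ none ∧
        ¬ ((0 :: List.replicate p 0) <+: w) ∧ ¬ ((1 :: Wmax) <+: w)) := by
  classical
  obtain ⟨hηne, -⟩ := hη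
  have hp : 1 ≤ p := hu.1
  obtain ⟨mW, aW, hWadm, hWsum, hWdig⟩ := hW
  have hWlen : Wmax.length = p := by rw [hWdig, dtDigits_length]
  intro w
  constructor
  · rintro ⟨n, hrep⟩
    rcases hrep with ⟨-, rfl⟩ | ⟨-, rfl⟩ |
      ⟨hn, k, m, a, ⟨hdvd, hpk, hadm, hnz, hsum⟩, rfl⟩ |
      ⟨hn, k, m, a, ⟨hdvd, hpk, hadm, hneF, hsum⟩, rfl⟩
    · refine ⟨⟨0, by simp⟩, by simp [runSeed, run], ?_, ?_⟩
      · intro h; have := h.length_le; simp at this; omega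
      · intro h; have := h.length_le; simp [hWlen] at this; omega
    · refine ⟨⟨0, by simp⟩, by simp [runSeed, run], ?_, ?_⟩
      · intro h; have := h.length_le; simp at this; omega
      · intro h; have := h.length_le; simp [hWlen] at this; omega
    · -- positive case
      refine ⟨⟨k / p, by simp [dtDigits_length, Nat.div_mul_cancel hdvd]⟩, ?_, ?_, ?_⟩
      · obtain ⟨y, hy⟩ := run_of_admSeq η hadm
        simp [runSeed, hy]
      · intro hpre
        have hpre2 : List.replicate p 0 <+: dtDigits k m :=
          (List.cons_prefix_cons.mp hpre).2
        have hkk : k = (k - p) + p := by omega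
        have e := dtDigits_split (k - p) p m
        rw [← hkk] at e
        rw [e] at hpre2
        have hrep2 := (prefix_block_iff (by simp [dtDigits_length])).mp hpre2
        have hall := (dtDigits_eq_replicate_iff p _).mp hrep2.symm
        obtain ⟨i, hi, hne0⟩ := hnz
        apply hne0
        have h2 := hall (p - 1 - i) (by omega)
        have e2 : p - 1 - i + (k - p) = k - 1 - i := by omega
        rwa [e2] at h2
      · intro hpre
        have := (List.cons_prefix_cons.mp hpre).1
        omega
    · -- negative case
      refine ⟨⟨k / p, by simp [dtDigits_length, Nat.div_mul_cancel hdvd]⟩, ?_, ?_, ?_⟩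
      · obtain ⟨y, hy⟩ := run_of_admSeq η hadm
        simp [runSeed, hy]
      · intro hpre
        have := (List.cons_prefix_cons.mp hpre).1
        omega
      · intro hpre
        have hpre2 : Wmax <+: dtDigits k m := (List.cons_prefix_cons.mp hpre).2
        have hkk : k = (k - p) + p := by omega
        have e := dtDigits_split (k - p) p m
        rw [← hkk] at e
        rw [e] at hpre2
        have hWD : Wmax = dtDigits p (fun j => m (j + (k - p))) :=
          (prefix_block_iff (by simp [dtDigits_length, hWlen])).mp hpre2
        have htop := admSeq_top η hadm hkk
        have hdigeq : dtDigits p (fun j => m (j + (k - p))) = dtDigits p mW := by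
          rw [← hWD, hWdig]
        have heqm := admSeq_eq_of_digits η htop hWadm hdigeq
        have hsum' : sumLen η p (fun j => m (j + (k - p)))
            = (iterW η p [u (-1)]).length - 1 := by
          rw [sumLen_congr η p (fun j hj => (heqm j hj).1), hWsum]
        have hfull := (concatDT_full_iff η htop hp).mpr hsum'
        apply hneF
        rw [flatten_eq_concatDT η hpk m]
        simpa using hfull
  · rintro ⟨⟨ℓ, hlen⟩, hrun, hpre0, hpre1⟩
    cases w with
    | nil => simp [runSeed] at hrun
    | cons d v =>
      by_cases hd0 : d = 0
      · subst hd0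
        simp only [runSeed, if_pos rfl] at hrun
        obtain ⟨m, a, hadm, hdig⟩ := admSeq_of_run η v (u 0) hrun
        rcases Nat.eq_zero_or_pos ℓ with rfl | hl
        · have hv : v = [] := List.length_eq_zero_iff.mp (by simp only [List.length_cons] at hlen; omega)
          subst hv
          exact ⟨0, Or.inl ⟨rfl, rfl⟩⟩
        · have hkv : v.length = ℓ * p := by simpa using hlen
          have hpk : p ≤ v.length := by
            rw [hkv]
            calc p = 1 * p := by omega
              _ ≤ ℓ * p := Nat.mul_le_mul_right p hl
          have hdvd : p ∣ v.length := ⟨ℓ, by rw [hkv, Nat.mul_comm]⟩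
          have hkk : v.length = (v.length - p) + p := by omega
          have hnz : ∃ i, i < p ∧ m (v.length - 1 - i) ≠ [] := by
            by_contra hall
            push_neg at hall
            apply hpre0
            refine List.cons_prefix_cons.mpr ⟨rfl, ?_⟩
            rw [← hdig]
            have e := dtDigits_split (v.length - p) p m
            rw [← hkk] at e
            rw [e]
            refine (prefix_block_iff (by simp [dtDigits_length])).mpr ?_
            refine ((dtDigits_eq_replicate_iff p _).mpr ?_).symm
            intro j hj
            have h2 := hall (p - 1 - j) (by omega)
            have e2 : v.length - 1 - (p - 1 - j) = j + (v.length - p) := by omega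
            rwa [e2] at h2
          have hε : 1 ≤ sumLen η v.length m := by
            obtain ⟨i, hi, hne'⟩ := hnz
            exact one_le_sumLen η hηne (show v.length - 1 - i < v.length by omega) hne'
          exact ⟨(sumLen η v.length m : ℤ), Or.inr (Or.inr (Or.inl
            ⟨by exact_mod_cast hε, v.length, m, a,
              ⟨hdvd, hpk, hadm, hnz, rfl⟩, by rw [hdig]⟩))⟩
      · by_cases hd1 : d = 1
        · subst hd1
          simp only [runSeed, if_neg (by omega : ¬ (1 : ℕ) = 0), if_pos rfl] at hrun
          obtain ⟨m, a, hadm, hdig⟩ := admSeq_of_run η v (u (-1)) hrun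
          rcases Nat.eq_zero_or_pos ℓ with rfl | hl
          · have hv : v = [] := List.length_eq_zero_iff.mp (by simp only [List.length_cons] at hlen; omega)
            subst hv
            exact ⟨-1, Or.inr (Or.inl ⟨rfl, rfl⟩)⟩
          · have hkv : v.length = ℓ * p := by simpa using hlen
            have hpk : p ≤ v.length := by
              rw [hkv]
              calc p = 1 * p := by omega
                _ ≤ ℓ * p := Nat.mul_le_mul_right p hl
            have hdvd : p ∣ v.length := ⟨ℓ, by rw [hkv, Nat.mul_comm]⟩
            have hkk : v.length = (v.length - p) + p := by omega
            have htop := admSeq_top η hadm hkk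
            have hneF : ((List.range p).map
                (fun i => iterW η (p - 1 - i) (m (v.length - 1 - i)))).flatten
                ++ [a (v.length - p)] ≠ iterW η p [u (-1)] := by
              intro heqF
              rw [flatten_eq_concatDT η hpk m] at heqF
              have hsum' := (concatDT_full_iff η htop hp).mp (by simpa using heqF)
              have hdigeq : dtDigits p (fun j => m (j + (v.length - p)))
                  = dtDigits p mW :=
                dtDigits_eq_of_sumLen_eq η hηne htop hWadm (by rw [hsum', hWsum])
              apply hpre1
              refine List.cons_prefix_cons.mpr ⟨rfl, ?_⟩
              rw [← hdig]
              have e := dtDigits_split (v.length - p) p m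
              rw [← hkk] at e
              rw [e, hWdig, ← hdigeq]
              exact List.prefix_append _ _
            have hneC : concatDT η p (fun j => m (j + (v.length - p)))
                ++ [a (v.length - p)] ≠ iterW η p [u (-1)] := by
              intro heq
              apply hneF
              rw [flatten_eq_concatDT η hpk m]
              exact heq
            have hgap := negGap η hηne hadm hp hpk hneC
            refine ⟨(sumLen η v.length m : ℤ) - (iterW η v.length [u (-1)]).length,
              Or.inr (Or.inr (Or.inr ⟨?_, v.length, m, a,
                ⟨hdvd, hpk, hadm, hneF, by ring⟩, by rw [hdig]⟩))⟩
            have h1 : (0 : ℤ) ≤ (sumLen η v.length m : ℤ) := by positivity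
            have h2 : (sumLen η v.length m : ℤ) + 2
                ≤ ((iterW η v.length [u (-1)]).length : ℤ) := by exact_mod_cast hgap
            omega
        · simp [runSeed, hd0, hd1] at hrun
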